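/- Let g ≥ 1 and let π_g be the genus-g surface group. If there exists a surjective group homomorphism from π_g onto the free group F_h of rank h, then h ≤ g. (This is the quantitative content of the isotropic-subspace argument in the proof of Lemma 3.2 of the paper: since the cup product H¹(F_h;ℤ) ⊗ H¹(F_h;ℤ) → H²(F_h;ℤ) vanishes, the image of φ* in H¹(S_g;ℤ) is an isotropic subspace and hence has dimension at most g.) -/

import Mathlib

open scoped commutatorElement

/-- The single relator `[a₁,b₁][a₂,b₂]⋯[a_g,b_g]` of the genus-`g` surface group,
where `aᵢ` is the generator of index `2*i` and `bᵢ` the generator of index `2*i+1`. -/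
def surfaceRelator (g : ℕ) : FreeGroup (Fin (2 * g)) :=
  (List.ofFn fun i : Fin g =>
    ⁅FreeGroup.of (⟨2 * i, by have := i.2; omega⟩ : Fin (2 * g)),
     FreeGroup.of (⟨2 * i + 1, by have := i.2; omega⟩ : Fin (2 * g))⁆).prod

/-- The genus-`g` surface group `π_g = ⟨a₁,b₁,…,a_g,b_g ∣ [a₁,b₁]⋯[a_g,b_g]⟩`. -/
def SurfaceGroup (g : ℕ) : Type :=
  PresentedGroup ({surfaceRelator g} : Set (FreeGroup (Fin (2 * g))))

instance (g : ℕ) : Group (SurfaceGroup g) :=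
  inferInstanceAs (Group (PresentedGroup _))

/-- The standard generators of the genus-`g` surface group. -/
def SurfaceGroup.gen (g : ℕ) (i : Fin (2 * g)) : SurfaceGroup g :=
  PresentedGroup.of i

/-- `IA(G)`: the subgroup of `Aut(G)` of automorphisms acting trivially on the
abelianization of `G`. -/
def IA (G : Type*) [Group G] : Subgroup (MulAut G) where
  carrier := {f | ∀ x : G, Abelianization.of (f x) = Abelianization.of x}
  one_mem' := fun _ => rfl
  mul_mem' := by
    intro f h hf hh x
    exact (hf (h x)).trans (hh x)
  inv_mem' := by
    intro f hf x
    have h := hf (f⁻¹ x)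
    simp only [MulAut.inv_def] at *
    rw [MulEquiv.apply_symm_apply] at h
    exact h.symm

/-- `Inn(G)`: the group of inner automorphisms of `G`. -/
def Inn (G : Type*) [Group G] : Subgroup (MulAut G) :=
  (MulAut.conj (G := G)).range

instance Inn.normal (G : Type*) [Group G] : (Inn G).Normal := by
  constructor
  rintro x ⟨γ, rfl⟩ f
  refine ⟨f γ, ?_⟩
  ext y
  simp [MulAut.conj_apply, mul_assoc]


/-!
Pull rational cohomology classes back along `ψ : π_g → F_h` and record them by their values on
the standard generators: this embeds `ℚ^h = H¹(F_h; ℚ)` into `ℚ^{2g}` when `ψ` is onto. Since `F_h`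
is free, any two classes `α, β` are the two abelian coordinates of a homomorphism from `F_h` to the
Heisenberg group (the cup product `α ∪ β` vanishes). Composing with `ψ` and evaluating on the
surface relation, a product of commutators whose image is central with entry the symplectic
pairing of the pulled-back classes, shows that the image of `ℚ^h` is isotropic for the
standard symplectic form on `ℚ^{2g}`, hence has dimension at most `g`.
-/

lemma LinearMap.BilinForm.two_mul_finrank_le_of_le_orthogonal {K V : Type*} [Field K]
    [AddCommGroup V] [Module K V] [FiniteDimensional K V] {B : LinearMap.BilinForm K V}
    (hB : B.Nondegenerate) {W : Submodule K V} (hW : W ≤ B.orthogonal W) :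
    2 * Module.finrank K W ≤ Module.finrank K V := by
  have h := Submodule.finrank_mono hW
  rw [LinearMap.BilinForm.finrank_orthogonal hB] at h
  have := Submodule.finrank_le W
  omega

section SymplecticForm

variable {l : Type*} [Fintype l] [DecidableEq l]

lemma Matrix.toBilin'_J_sumElim {R : Type*} [CommRing R] (u v u' v' : l → R) :
    (Matrix.J l R).toBilin' (Sum.elim u v) (Sum.elim u' v') = v ⬝ᵥ u' - u ⬝ᵥ v' := by
  simp [Matrix.toBilin'_apply', Matrix.J, Matrix.fromBlocks_mulVec, Matrix.neg_mulVec]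
  ring

lemma Matrix.nondegenerate_toBilin'_J {K : Type*} [Field K] :
    (Matrix.J l K).toBilin'.Nondegenerate :=
  LinearMap.BilinForm.nondegenerate_toBilin'_of_det_ne_zero' _
    (left_ne_zero_of_mul_eq_one (Matrix.J_det_mul_J_det l K))

end SymplecticForm

/-- The group of upper unitriangular matrices `[[1, x, z], [0, 1, y], [0, 0, 1]]`. -/
@[ext]
structure Heisenberg (R : Type*) where
  x : R
  y : R
  z : R

namespace Heisenberg

variable {R : Type*} [CommRing R]

instance : Mul (Heisenberg R) := ⟨fun a b => ⟨a.x + b.x, a.y + b.y, a.z + b.z + a.x * b.y⟩⟩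
instance : One (Heisenberg R) := ⟨⟨0, 0, 0⟩⟩
instance : Inv (Heisenberg R) := ⟨fun a => ⟨-a.x, -a.y, -a.z + a.x * a.y⟩⟩

@[simp] lemma mul_x (a b : Heisenberg R) : (a * b).x = a.x + b.x := rfl
@[simp] lemma mul_y (a b : Heisenberg R) : (a * b).y = a.y + b.y := rfl
@[simp] lemma mul_z (a b : Heisenberg R) : (a * b).z = a.z + b.z + a.x * b.y := rfl
@[simp] lemma one_x : (1 : Heisenberg R).x = 0 := rfl
@[simp] lemma one_y : (1 : Heisenberg R).y = 0 := rfl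
@[simp] lemma one_z : (1 : Heisenberg R).z = 0 := rfl
@[simp] lemma inv_x (a : Heisenberg R) : a⁻¹.x = -a.x := rfl
@[simp] lemma inv_y (a : Heisenberg R) : a⁻¹.y = -a.y := rfl
@[simp] lemma inv_z (a : Heisenberg R) : a⁻¹.z = -a.z + a.x * a.y := rfl

instance : Group (Heisenberg R) where
  mul_assoc a b c := by ext <;> simp only [mul_x, mul_y, mul_z] <;> ring
  one_mul a := by ext <;> simp
  mul_one a := by ext <;> simp
  inv_mul_cancel a := by ext <;> simp only [mul_x, mul_y, mul_z, inv_x, inv_y, inv_z,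
    one_x, one_y, one_z] <;> ring

@[simps]
def fstHom : Heisenberg R →* Multiplicative R where
  toFun a := .ofAdd a.x
  map_one' := rfl
  map_mul' _ _ := rfl

@[simps]
def sndHom : Heisenberg R →* Multiplicative R where
  toFun a := .ofAdd a.y
  map_one' := rfl
  map_mul' _ _ := rfl

@[simps]
def center : Multiplicative R →* Heisenberg R where
  toFun c := ⟨0, 0, c.toAdd⟩
  map_one' := rfl
  map_mul' _ _ := by ext <;> simp

lemma commutator_eq_center (a b : Heisenberg R) :
    ⁅a, b⁆ = center (.ofAdd (a.x * b.y - b.x * a.y)) := by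
  ext <;> simp only [commutatorElement_def, mul_x, mul_y, mul_z, inv_x, inv_y, inv_z,
    center_apply_x, center_apply_y, center_apply_z, toAdd_ofAdd] <;> ring

lemma list_prod_ofFn_commutator {n : ℕ} (a b : Fin n → Heisenberg R) :
    (List.ofFn fun i => ⁅a i, b i⁆).prod =
      center (.ofAdd (∑ i, ((a i).x * (b i).y - (b i).x * (a i).y))) := by
  rw [ofAdd_sum, ← List.prod_ofFn, map_list_prod, List.map_ofFn]
  simp only [Function.comp_def, commutator_eq_center]

lemma exists_lift_freeGroup {ι : Type*} (α β : ι → R) :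
    ∃ Λ : FreeGroup ι →* Heisenberg R,
      fstHom.comp Λ = FreeGroup.lift (fun k => .ofAdd (α k)) ∧
      sndHom.comp Λ = FreeGroup.lift (fun k => .ofAdd (β k)) :=
  ⟨FreeGroup.lift fun k => ⟨α k, β k, 0⟩,
    FreeGroup.ext_hom _ _ fun _ => by simp, FreeGroup.ext_hom _ _ fun _ => by simp⟩

end Heisenberg

namespace FreeGroup

variable {ι R : Type*}

lemma lift_ofAdd_add [AddCommGroup R] (α β : ι → R) :
    lift (fun k => Multiplicative.ofAdd (α k + β k)) =
      lift (fun k => .ofAdd (α k)) * lift (fun k => .ofAdd (β k)) :=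
  ext_hom _ _ fun _ => by simp

lemma lift_ofAdd_mul [NonUnitalNonAssocRing R] (c : R) (α : ι → R) :
    lift (fun k => Multiplicative.ofAdd (c * α k)) =
      (AddMonoidHom.mulLeft c).toMultiplicative.comp (lift fun k => .ofAdd (α k)) :=
  ext_hom _ _ fun _ => by simp

end FreeGroup

namespace SurfaceGroup

variable {g : ℕ}

def genA (i : Fin g) : SurfaceGroup g := gen g ⟨2 * i, by omega⟩

def genB (i : Fin g) : SurfaceGroup g := gen g ⟨2 * i + 1, by omega⟩

lemma prod_commutator_eq_one : (List.ofFn fun i : Fin g => ⁅genA i, genB i⁆).prod = 1 := by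
  have h : PresentedGroup.mk ({surfaceRelator g} : Set _) (surfaceRelator g) = 1 :=
    (QuotientGroup.eq_one_iff _).2 (Subgroup.subset_normalClosure rfl)
  refine Eq.trans ?_ h
  unfold surfaceRelator
  rw [map_list_prod, List.map_ofFn]
  simp only [Function.comp_def, map_commutatorElement]
  rfl

lemma hom_ext {G : Type*} [Group G] {f₁ f₂ : SurfaceGroup g →* G}
    (ha : ∀ i, f₁ (genA i) = f₂ (genA i)) (hb : ∀ i, f₁ (genB i) = f₂ (genB i)) : f₁ = f₂ := by
  refine PresentedGroup.ext fun t => ?_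
  obtain ⟨i, hi | hi⟩ := Nat.even_or_odd' t
  · rw [show t = ⟨2 * i, by omega⟩ from Fin.ext hi]
    exact ha ⟨i, by omega⟩
  · rw [show t = ⟨2 * i + 1, by omega⟩ from Fin.ext hi]
    exact hb ⟨i, by omega⟩

variable {R : Type*} [CommRing R]

/-- The coordinates of a class in `H¹(π_g; R)`: its values on `a₁, …, a_g`, then on `b₁, …, b_g`. -/
def periods (χ : SurfaceGroup g →* Multiplicative R) : Fin g ⊕ Fin g → R :=
  Sum.elim (fun i => (χ (genA i)).toAdd) (fun i => (χ (genB i)).toAdd)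

lemma periods_injective :
    Function.Injective (periods : (SurfaceGroup g →* Multiplicative R) → Fin g ⊕ Fin g → R) :=
  fun _ _ h => hom_ext (fun i => Multiplicative.toAdd.injective (congrFun h (.inl i)))
    (fun i => Multiplicative.toAdd.injective (congrFun h (.inr i)))

lemma periods_one : periods (1 : SurfaceGroup g →* Multiplicative R) = 0 := by
  ext (i | i) <;> rfl

open Heisenberg in
lemma toBilin'_J_periods_fstHom_sndHom (ρ : SurfaceGroup g →* Heisenberg R) :
    (Matrix.J (Fin g) R).toBilin' (periods (fstHom.comp ρ)) (periods (sndHom.comp ρ)) = 0 := by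
  have h := congrArg ρ prod_commutator_eq_one
  rw [map_list_prod, List.map_ofFn, map_one, Function.comp_def] at h
  simp only [map_commutatorElement, list_prod_ofFn_commutator] at h
  have hsum := congrArg z h
  simp only [center_apply_z, toAdd_ofAdd, one_z, Finset.sum_sub_distrib] at hsum
  simp only [periods, Matrix.toBilin'_J_sumElim, dotProduct, MonoidHom.comp_apply,
    fstHom_apply, sndHom_apply, toAdd_ofAdd]
  linear_combination -hsum

variable {ι : Type*}

/-- Pullback `H¹(F; R) → H¹(π_g; R)` along `ψ`, a class on the free group `F` on `ι` being
given by its values on the generators. -/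
def pullbackPeriods (ψ : SurfaceGroup g →* FreeGroup ι) : (ι → R) →ₗ[R] Fin g ⊕ Fin g → R where
  toFun α := periods ((FreeGroup.lift fun k => .ofAdd (α k)).comp ψ)
  map_add' α β := by
    ext (i | i) <;>
      simp only [periods, Pi.add_apply, FreeGroup.lift_ofAdd_add, MonoidHom.comp_apply,
        MonoidHom.mul_apply, toAdd_mul, Sum.elim_inl, Sum.elim_inr]
  map_smul' c α := by
    ext (i | i) <;>
      simp only [periods, Pi.smul_apply, smul_eq_mul, FreeGroup.lift_ofAdd_mul,
        MonoidHom.comp_apply, AddMonoidHom.toMultiplicative_apply_apply,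
        AddMonoidHom.coe_mulLeft, toAdd_ofAdd, RingHom.id_apply, Sum.elim_inl, Sum.elim_inr]

lemma pullbackPeriods_injective {ψ : SurfaceGroup g →* FreeGroup ι}
    (hψ : Function.Surjective ψ) : Function.Injective (pullbackPeriods (R := R) ψ) := by
  rw [← LinearMap.ker_eq_bot, LinearMap.ker_eq_bot']
  intro α hα
  have hcomp : (FreeGroup.lift fun k => Multiplicative.ofAdd (α k)).comp ψ = 1 :=
    periods_injective (hα.trans periods_one.symm)
  have hlift : FreeGroup.lift (fun k => Multiplicative.ofAdd (α k)) = 1 :=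
    (MonoidHom.cancel_right hψ).1 hcomp
  funext k
  simpa using DFunLike.congr_fun hlift (FreeGroup.of k)

lemma toBilin'_J_pullbackPeriods (ψ : SurfaceGroup g →* FreeGroup ι) (α β : ι → R) :
    (Matrix.J (Fin g) R).toBilin' (pullbackPeriods ψ α) (pullbackPeriods ψ β) = 0 := by
  obtain ⟨Λ, hα, hβ⟩ := Heisenberg.exists_lift_freeGroup α β
  have := toBilin'_J_periods_fstHom_sndHom (Λ.comp ψ)
  rwa [← MonoidHom.comp_assoc, ← MonoidHom.comp_assoc, hα, hβ] at this

end SurfaceGroup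

theorem rank_le_genus_of_surjective_general (g h : ℕ)
    (φ : SurfaceGroup g →* FreeGroup (Fin h)) (hφ : Function.Surjective φ) :
    h ≤ g := by
  let T := SurfaceGroup.pullbackPeriods (R := ℚ) φ
  have hT : LinearMap.range T ≤ (Matrix.J (Fin g) ℚ).toBilin'.orthogonal (LinearMap.range T) := by
    rintro _ ⟨β, rfl⟩ _ ⟨α, rfl⟩
    exact SurfaceGroup.toBilin'_J_pullbackPeriods φ α β
  have hdim := LinearMap.BilinForm.two_mul_finrank_le_of_le_orthogonal
    Matrix.nondegenerate_toBilin'_J hT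
  rw [LinearMap.finrank_range_of_inj (SurfaceGroup.pullbackPeriods_injective hφ)] at hdim
  simp only [Module.finrank_pi, Fintype.card_sum, Fintype.card_fin] at hdim
  omega

/-- For `g ≥ 1`, if the genus-`g` surface group surjects onto the free group of
rank `h`, then `h ≤ g`. -/
theorem rank_le_genus_of_surjective (g h : ℕ) (hg : 1 ≤ g)
    (φ : SurfaceGroup g →* FreeGroup (Fin h)) (hφ : Function.Surjective φ) :
    h ≤ g :=
  rank_le_genus_of_surjective_general g h φ hφ
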